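/- Let k̄ = (k_1,…,k_d) ∈ ℕ^d with k = k_1⋯k_d ≥ 2, and let p̄ = (p_1,…,p_d), θ̄ = (θ_1,…,θ_d) ∈ [1,∞]^d satisfy |1/p_i − 1/θ_i| ≤ (log 2)/(log k) for every i = 1,…,d. Then (1/2) B_{p̄}^{k̄} ⊆ B_{θ̄}^{k̄} ⊆ 2 B_{p̄}^{k̄}. -/

import Mathlib

open scoped ENNReal BigOperators
open Filter

/-- The `l_p` norm of a finite real vector, `p ∈ [1,∞]`. -/
noncomputable def lpNorm {ι : Type*} [Fintype ι] (p : ℝ≥0∞) (x : ι → ℝ) : ℝ :=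
  if p = ∞ then ⨆ i, |x i| else (∑ i, |x i| ^ p.toReal) ^ (1 / p.toReal)

/-- The mixed norm on `ℝ^{k₁⋯k_d}`, defined recursively: for `d = 1` it is the
`l_{p₁}^{k₁}` norm, and for `d ≥ 2` one first takes the mixed norm in the first
`d-1` indices and then the `l_{p_d}^{k_d}` norm in the last index. -/
noncomputable def mixedNorm : (d : ℕ) → (k : Fin d → ℕ) → (p : Fin d → ℝ≥0∞) →
    ((∀ i, Fin (k i)) → ℝ) → ℝ
  | 0, _, _, x => |x (fun i => i.elim0)|
  | d + 1, k, p, x =>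
      lpNorm (p (Fin.last d)) (fun jd : Fin (k (Fin.last d)) =>
        mixedNorm d (fun i => k i.castSucc) (fun i => p i.castSucc)
          (fun y => x (Fin.snoc y jd)))

/-- The `l_q` norm (finite exponent `q`). -/
noncomputable def lqNorm {ι : Type*} [Fintype ι] (q : ℝ) (x : ι → ℝ) : ℝ :=
  (∑ i, |x i| ^ q) ^ (1 / q)

/-- The Kolmogorov `n`-width of `M` with respect to the norm `nrm`. -/
noncomputable def kolWidth {ι : Type*} [Fintype ι] (n : ℕ) (M : Set (ι → ℝ))
    (nrm : (ι → ℝ) → ℝ) : ℝ :=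
  ⨅ L : {L : Submodule ℝ (ι → ℝ) // Module.finrank ℝ L ≤ n},
    ⨆ x ∈ M, ⨅ y ∈ (L.1 : Set (ι → ℝ)), nrm (x - y)

/-- `Φ(p̄, k̄, q) = ∏_j k_j^{(1/q - 1/p_j)_+}`. -/
noncomputable def Phi {d : ℕ} (p : Fin d → ℝ≥0∞) (k : Fin d → ℕ) (q : ℝ) : ℝ :=
  ∏ j, (k j : ℝ) ^ max (1 / q - (1 / p j).toReal) 0

/-- `∑_j λ_j / p_{α_j, i}`, the reciprocal of `θ_i(ᾱ, I)`. -/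
noncomputable def thetaRecip {d m : ℕ} {A : Type*} (p : A → Fin d → ℝ≥0∞)
    (α : Fin m → A) (lam : Fin m → ℝ) (i : Fin d) : ℝ :=
  ∑ j, lam j * (1 / p (α j) i).toReal

/-- The vector `θ̄(ᾱ, I)`, given by `1/θ_i = ∑_j λ_j / p_{α_j, i}`. -/
noncomputable def theta {d m : ℕ} {A : Type*} (p : A → Fin d → ℝ≥0∞)
    (α : Fin m → A) (lam : Fin m → ℝ) (i : Fin d) : ℝ≥0∞ :=
  (ENNReal.ofReal (thetaRecip p α lam i))⁻¹

/-- `(I, λ)` witnesses that `ᾱ ∈ 𝒩_m`: `#I = m - 1`, the `λ_j` are positive and sum to `1`,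
`∑_j λ_j / p_{α_j, i} = 1/q` for `i ∈ I`, and the points `((1/p_{α_j,i})_{i∈I})_j`
are affinely independent. -/
def IsNWitness {d : ℕ} {A : Type*} (q : ℝ) (p : A → Fin d → ℝ≥0∞) {m : ℕ}
    (α : Fin m → A) (I : Finset (Fin d)) (lam : Fin m → ℝ) : Prop :=
  I.card = m - 1 ∧ (∀ j, 0 < lam j) ∧ ∑ j, lam j = 1 ∧
    (∀ i ∈ I, thetaRecip p α lam i = 1 / q) ∧
    AffineIndependent ℝ (fun j : Fin m => fun i : I => (1 / p (α j) i).toReal)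

/-- `Ψ({p̄_α}, k̄, q) = min_{1 ≤ m ≤ d+1} inf_{(ᾱ,I) : ᾱ ∈ 𝒩_m}
ν_{α_1}^{λ_1} ⋯ ν_{α_m}^{λ_m} Φ(θ̄(ᾱ,I), k̄, q)`. -/
noncomputable def Psi {d : ℕ} {A : Type*} (p : A → Fin d → ℝ≥0∞) (ν : A → ℝ)
    (k : Fin d → ℕ) (q : ℝ) : ℝ :=
  sInf { r : ℝ | ∃ m, 1 ≤ m ∧ m ≤ d + 1 ∧ ∃ (α : Fin m → A) (I : Finset (Fin d))
    (lam : Fin m → ℝ), IsNWitness q p α I lam ∧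
      r = (∏ j, ν (α j) ^ lam j) * Phi (theta p α lam) k q }

/-- The family `(p̄_α)_{α ∈ A}` is in general position. -/
def GeneralPosition {d : ℕ} {A : Type*} (q : ℝ) (p : A → Fin d → ℝ≥0∞) : Prop :=
  (∀ m, 2 ≤ m → m ≤ d + 1 → ∀ α : Fin m → A, Function.Injective α →
    ∀ I : Finset (Fin d), I.card = m - 1 →
      AffineIndependent ℝ (fun j : Fin m => fun i : I => (1 / p (α j) i).toReal)) ∧
  (∀ m, 1 ≤ m → m ≤ d + 1 → ∀ (α : Fin m → A) (I : Finset (Fin d)) (lam : Fin m → ℝ),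
    IsNWitness q p α I lam → ∀ i ∉ I, thetaRecip p α lam i ≠ 1 / q)

open scoped Classical in
/-- The 0–1 vector `x̂(s̄)` equal to `1` exactly on the box `{(i₁,…,i_d) : i_j < s_j}`. -/
noncomputable def xhat (d : ℕ) (k : Fin d → ℕ) (s : Fin d → ℕ) :
    (∀ i, Fin (k i)) → ℝ :=
  fun idx => if ∀ i, (idx i : ℕ) < s i then 1 else 0

section helpers

variable {ι : Type*} [Fintype ι]

lemma lpNorm_nonneg (p : ℝ≥0∞) (x : ι → ℝ) : 0 ≤ lpNorm p x := by
  unfold lpNorm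
  split
  · exact Real.iSup_nonneg fun i => abs_nonneg _
  · positivity

lemma lpNorm_mono {p : ℝ≥0∞} {x y : ι → ℝ} (h : ∀ i, |x i| ≤ |y i|) :
    lpNorm p x ≤ lpNorm p y := by
  unfold lpNorm
  split
  · exact Real.iSup_le (fun i => le_trans (h i)
      (le_ciSup (f := fun j => |y j|) (Finite.bddAbove_range _) i))
      (Real.iSup_nonneg fun i => abs_nonneg _)
  · apply Real.rpow_le_rpow (by positivity)
      (Finset.sum_le_sum fun i _ => Real.rpow_le_rpow (abs_nonneg _) (h i) ENNReal.toReal_nonneg)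
      (by positivity)

lemma lpNorm_const_mul [Nonempty ι] {p : ℝ≥0∞} (hp : 1 ≤ p) {c : ℝ} (hc : 0 ≤ c)
    (x : ι → ℝ) : lpNorm p (fun i => c * x i) = c * lpNorm p x := by
  unfold lpNorm
  split
  · simp_rw [abs_mul, abs_of_nonneg hc]
    exact (Real.mul_iSup_of_nonneg hc _).symm
  · rename_i hne
    have hr : 1 ≤ p.toReal := by
      simpa using ENNReal.toReal_mono hne hp
    have hr0 : p.toReal ≠ 0 := by linarith
    simp_rw [abs_mul, abs_of_nonneg hc, Real.mul_rpow hc (abs_nonneg _), ← Finset.mul_sum]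
    rw [Real.mul_rpow (by positivity) (by positivity), one_div,
      Real.rpow_rpow_inv hc hr0]

lemma lpNorm_le_mul [Nonempty ι] {p q : ℝ≥0∞} (hp : 1 ≤ p) (hq : 1 ≤ q) (x : ι → ℝ) :
    lpNorm q x ≤
      (Fintype.card ι : ℝ) ^ max ((1/q).toReal - (1/p).toReal) 0 * lpNorm p x := by
  have hcard : (1 : ℝ) ≤ (Fintype.card ι : ℝ) := by
    exact_mod_cast Fintype.card_pos
  by_cases hqt : q = ∞
  · -- q = ∞ : exponent is 0, need sup ≤ lpNorm p
    have h0 : (1/q).toReal = 0 := by simp [hqt]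
    have he : max ((1/q).toReal - (1/p).toReal) 0 = 0 := by
      rw [h0, zero_sub, max_eq_right (neg_nonpos.mpr ENNReal.toReal_nonneg)]
    rw [he, Real.rpow_zero, one_mul]
    unfold lpNorm
    rw [if_pos hqt]
    split
    · exact le_refl _
    · rename_i hne
      have hr : 1 ≤ p.toReal := by simpa using ENNReal.toReal_mono hne hp
      have hr0 : p.toReal ≠ 0 := by linarith
      apply Real.iSup_le _ (by positivity)
      intro i
      have h1 : |x i| ^ p.toReal ≤ ∑ j, |x j| ^ p.toReal :=
        Finset.single_le_sum (f := fun j => |x j| ^ p.toReal)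
          (fun j _ => by positivity) (Finset.mem_univ i)
      calc |x i| = (|x i| ^ p.toReal) ^ (1/p.toReal) := by
            rw [one_div, Real.rpow_rpow_inv (abs_nonneg _) hr0]
        _ ≤ (∑ j, |x j| ^ p.toReal) ^ (1/p.toReal) :=
            Real.rpow_le_rpow (by positivity) h1 (by positivity)
  · have hs : 1 ≤ q.toReal := by simpa using ENNReal.toReal_mono hqt hq
    have hs0 : q.toReal ≠ 0 := by linarith
    set s := q.toReal with hsdef
    have h1q : (1/q).toReal = 1/s := by rw [one_div, ENNReal.toReal_inv, one_div]
    by_cases hpt : p = ∞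
    · -- p = ∞ case
      have h1p : (1/p).toReal = 0 := by simp [hpt]
      have he : max ((1/q).toReal - (1/p).toReal) 0 = 1/s := by
        rw [h1p, h1q, sub_zero, max_eq_left (by positivity)]
      rw [he]
      unfold lpNorm
      rw [if_neg hqt, if_pos hpt]
      set S := ⨆ i, |x i| with hS
      have hS0 : 0 ≤ S := Real.iSup_nonneg fun i => abs_nonneg _
      have hle : ∀ i, |x i| ≤ S := fun i =>
        le_ciSup (f := fun j => |x j|) (Finite.bddAbove_range _) i
      have hsum : ∑ i, |x i| ^ s ≤ (Fintype.card ι : ℝ) * S ^ s := by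
        calc ∑ i, |x i| ^ s ≤ ∑ _i : ι, S ^ s :=
              Finset.sum_le_sum fun i _ => Real.rpow_le_rpow (abs_nonneg _) (hle i) (by linarith)
          _ = (Fintype.card ι : ℝ) * S ^ s := by
              rw [Finset.sum_const, Finset.card_univ, nsmul_eq_mul]
      calc (∑ i, |x i| ^ s) ^ (1/s) ≤ ((Fintype.card ι : ℝ) * S ^ s) ^ (1/s) :=
            Real.rpow_le_rpow (by positivity) hsum (by positivity)
        _ = (Fintype.card ι : ℝ) ^ (1/s) * S := by
            rw [Real.mul_rpow (by positivity) (by positivity), one_div,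
              Real.rpow_rpow_inv hS0 hs0]
    · -- both finite
      have hr : 1 ≤ p.toReal := by simpa using ENNReal.toReal_mono hpt hp
      have hr0 : p.toReal ≠ 0 := by linarith
      set r := p.toReal with hrdef
      have h1p : (1/p).toReal = 1/r := by rw [one_div, ENNReal.toReal_inv, one_div]
      unfold lpNorm
      rw [if_neg hqt, if_neg hpt, ← hrdef, ← hsdef, h1p, h1q]
      rcases le_or_gt r s with hrs | hsr
      · -- r ≤ s : monotone case, exponent 0
        have he : max (1/s - 1/r) 0 = 0 := by
          rw [max_eq_right]
          have : 1/s ≤ 1/r := one_div_le_one_div_of_le (by linarith) hrs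
          linarith
        rw [he, Real.rpow_zero, one_mul]
        set A := ∑ i, |x i| ^ r with hA
        have hA0 : 0 ≤ A := by positivity
        have key : ∑ i, |x i| ^ s ≤ A ^ (s/r) := by
          have hxle : ∀ i, |x i| ≤ A ^ (1/r) := by
            intro i
            have h1 : |x i| ^ r ≤ A :=
              Finset.single_le_sum (f := fun j => |x j| ^ r)
                (fun j _ => by positivity) (Finset.mem_univ i)
            calc |x i| = (|x i| ^ r) ^ (1/r) := by
                  rw [one_div, Real.rpow_rpow_inv (abs_nonneg _) hr0]
              _ ≤ A ^ (1/r) := Real.rpow_le_rpow (by positivity) h1 (by positivity)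
          calc ∑ i, |x i| ^ s = ∑ i, |x i| ^ r * |x i| ^ (s - r) := by
                refine Finset.sum_congr rfl fun i _ => ?_
                rw [← Real.rpow_add' (abs_nonneg _) (by ring_nf; linarith)]
                norm_num
            _ ≤ ∑ i, |x i| ^ r * A ^ ((s - r)/r) := by
                refine Finset.sum_le_sum fun i _ => ?_
                apply mul_le_mul_of_nonneg_left _ (by positivity)
                calc |x i| ^ (s - r) ≤ (A ^ (1/r)) ^ (s - r) :=
                      Real.rpow_le_rpow (abs_nonneg _) (hxle i) (by linarith)
                  _ = A ^ ((s - r)/r) := by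
                      rw [← Real.rpow_mul hA0]
                      ring_nf
            _ = A * A ^ ((s - r)/r) := by rw [← Finset.sum_mul]
            _ = A ^ (s/r) := by
                have hh : s/r = 1 + (s - r)/r := by field_simp; ring
                rw [hh, Real.rpow_one_add' hA0 (by rw [← hh]; positivity)]
        calc (∑ i, |x i| ^ s) ^ (1/s) ≤ (A ^ (s/r)) ^ (1/s) :=
              Real.rpow_le_rpow (by positivity) key (by positivity)
          _ = A ^ (1/r) := by
              rw [← Real.rpow_mul hA0]
              congr 1
              field_simp
      · -- s < r : Hölder case
        have he : max (1/s - 1/r) 0 = 1/s - 1/r := by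
          rw [max_eq_left]
          have : 1/r < 1/s := one_div_lt_one_div_of_lt (by linarith) hsr
          linarith
        rw [he]
        have ht : 1 ≤ r/s := (one_le_div (by linarith)).mpr (le_of_lt hsr)
        have key := Real.rpow_sum_le_const_mul_sum_rpow Finset.univ
          (fun i => |x i| ^ s) ht
        simp only [Finset.card_univ] at key
        have habs : ∀ i, |(|x i| ^ s)| = |x i| ^ s := fun i => abs_of_nonneg (by positivity)
        simp only [habs] at key
        have hpow : ∀ i, (|x i| ^ s) ^ (r/s) = |x i| ^ r := by
          intro i
          rw [← Real.rpow_mul (abs_nonneg _)]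
          congr 1
          field_simp
        simp only [hpow] at key
        -- key : (∑ |x i|^s) ^ (r/s) ≤ card ^ (r/s - 1) * ∑ |x i|^r
        have final : (∑ i, |x i| ^ s) ^ (1/s) ≤
            ((Fintype.card ι : ℝ) ^ (r/s - 1) * ∑ i, |x i| ^ r) ^ (1/r) := by
          have h1 : (∑ i, |x i| ^ s) ^ (1/s) = ((∑ i, |x i| ^ s) ^ (r/s)) ^ (1/r) := by
            rw [← Real.rpow_mul (by positivity)]
            congr 1
            field_simp
          rw [h1]
          exact Real.rpow_le_rpow (by positivity) key (by positivity)
        calc (∑ i, |x i| ^ s) ^ (1/s)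
            ≤ ((Fintype.card ι : ℝ) ^ (r/s - 1) * ∑ i, |x i| ^ r) ^ (1/r) := final
          _ = (Fintype.card ι : ℝ) ^ (1/s - 1/r) * (∑ i, |x i| ^ r) ^ (1/r) := by
              rw [Real.mul_rpow (by positivity) (by positivity), ← Real.rpow_mul (by positivity)]
              congr 2
              field_simp

end helpers

lemma mixedNorm_nonneg : ∀ (d : ℕ) (k : Fin d → ℕ) (p : Fin d → ℝ≥0∞)
    (x : (∀ i, Fin (k i)) → ℝ), 0 ≤ mixedNorm d k p x
  | 0, _, _, x => abs_nonneg _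
  | _ + 1, _, _, _ => lpNorm_nonneg _ _

lemma mixedNorm_le_mul : ∀ (d : ℕ) (k : Fin d → ℕ) (p θ : Fin d → ℝ≥0∞),
    (∀ i, 1 ≤ k i) → (∀ i, 1 ≤ p i) → (∀ i, 1 ≤ θ i) →
    ∀ x, mixedNorm d k θ x ≤
      (∏ i, (k i : ℝ) ^ max ((1/θ i).toReal - (1/p i).toReal) 0) * mixedNorm d k p x := by
  intro d
  induction d with
  | zero =>
    intro k p θ _ _ _ x
    simp [mixedNorm]
  | succ d ih =>
    intro k p θ hk hp hθ x
    haveI : Nonempty (Fin (k (Fin.last d))) := Fin.pos_iff_nonempty.mp (hk _)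
    set C := ∏ i : Fin d, (k i.castSucc : ℝ) ^
      max ((1/θ i.castSucc).toReal - (1/p i.castSucc).toReal) 0 with hC
    have hC0 : 0 ≤ C := Finset.prod_nonneg fun i _ => by positivity
    set G : Fin (k (Fin.last d)) → ℝ := fun jd =>
      mixedNorm d (fun i => k i.castSucc) (fun i => p i.castSucc)
        (fun y => x (Fin.snoc y jd)) with hG
    have step1 : mixedNorm (d+1) k θ x ≤ lpNorm (θ (Fin.last d)) (fun jd => C * G jd) := by
      show lpNorm (θ (Fin.last d)) _ ≤ _
      apply lpNorm_mono
      intro jd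
      rw [abs_of_nonneg (mixedNorm_nonneg _ _ _ _),
        abs_of_nonneg (mul_nonneg hC0 (mixedNorm_nonneg _ _ _ _))]
      exact ih _ _ _ (fun i => hk _) (fun i => hp _) (fun i => hθ _) _
    have step2 : lpNorm (θ (Fin.last d)) (fun jd => C * G jd) =
        C * lpNorm (θ (Fin.last d)) G := lpNorm_const_mul (hθ _) hC0 _
    have step3 : lpNorm (θ (Fin.last d)) G ≤
        (k (Fin.last d) : ℝ) ^
          max ((1/θ (Fin.last d)).toReal - (1/p (Fin.last d)).toReal) 0 *
          lpNorm (p (Fin.last d)) G := by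
      have := lpNorm_le_mul (p := p (Fin.last d)) (q := θ (Fin.last d))
        (hp _) (hθ _) G
      simpa using this
    have hfin : lpNorm (p (Fin.last d)) G = mixedNorm (d+1) k p x := rfl
    calc mixedNorm (d+1) k θ x ≤ C * lpNorm (θ (Fin.last d)) G := by
          rw [← step2]; exact step1
      _ ≤ C * ((k (Fin.last d) : ℝ) ^
            max ((1/θ (Fin.last d)).toReal - (1/p (Fin.last d)).toReal) 0 *
            lpNorm (p (Fin.last d)) G) := mul_le_mul_of_nonneg_left step3 hC0
      _ = (∏ i : Fin (d+1), (k i : ℝ) ^ max ((1/θ i).toReal - (1/p i).toReal) 0) *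
            mixedNorm (d+1) k p x := by
          rw [Fin.prod_univ_castSucc, hfin]
          ring

lemma prod_pow_le_two {d : ℕ} (k : Fin d → ℕ) (hk : ∀ i, 1 ≤ k i)
    (hk2 : 2 ≤ ∏ i, k i) (e : Fin d → ℝ) (he0 : ∀ i, 0 ≤ e i)
    (he : ∀ i, e i ≤ Real.log 2 / Real.log (∏ i, k i : ℕ)) :
    ∏ i, (k i : ℝ) ^ e i ≤ 2 := by
  have hK : (2:ℝ) ≤ ((∏ i, k i : ℕ) : ℝ) := by exact_mod_cast hk2
  have hlogK : 0 < Real.log ((∏ i, k i : ℕ) : ℝ) := Real.log_pos (by linarith)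
  calc ∏ i, (k i : ℝ) ^ e i
      ≤ ∏ i, (k i : ℝ) ^ (Real.log 2 / Real.log ((∏ i, k i : ℕ) : ℝ)) := by
        refine Finset.prod_le_prod (fun i _ => by positivity) (fun i _ => ?_)
        exact Real.rpow_le_rpow_of_exponent_le (by exact_mod_cast hk i) (he i)
    _ = ((∏ i, (k i : ℝ))) ^ (Real.log 2 / Real.log ((∏ i, k i : ℕ) : ℝ)) :=
        Real.finset_prod_rpow _ _ (fun i _ => by positivity) _
    _ = (((∏ i, k i : ℕ) : ℝ)) ^ (Real.log 2 / Real.log ((∏ i, k i : ℕ) : ℝ)) := by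
        norm_cast
    _ = 2 := by
        rw [Real.rpow_def_of_pos (by linarith)]
        rw [mul_div_assoc']
        rw [mul_comm, mul_div_assoc, div_self (ne_of_gt hlogK), mul_one, Real.exp_log two_pos]


/-- If `|1/p_i - 1/θ_i| ≤ log 2 / log k` for all `i`, then
`(1/2) B_{p̄}^{k̄} ⊆ B_{θ̄}^{k̄} ⊆ 2 B_{p̄}^{k̄}`. -/
theorem statement8 (d : ℕ) (hd : 1 ≤ d) (k : Fin d → ℕ) (hk : ∀ i, 1 ≤ k i)
    (hk2 : 2 ≤ ∏ i, k i)
    (p θ : Fin d → ℝ≥0∞) (hp : ∀ i, 1 ≤ p i) (hθ : ∀ i, 1 ≤ θ i)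
    (hclose : ∀ i, |(1 / p i).toReal - (1 / θ i).toReal| ≤
      Real.log 2 / Real.log (∏ i, k i : ℕ)) :
    {x : (∀ i, Fin (k i)) → ℝ | mixedNorm d k p x ≤ 1 / 2} ⊆
      {x : (∀ i, Fin (k i)) → ℝ | mixedNorm d k θ x ≤ 1} ∧
    {x : (∀ i, Fin (k i)) → ℝ | mixedNorm d k θ x ≤ 1} ⊆
      {x : (∀ i, Fin (k i)) → ℝ | mixedNorm d k p x ≤ 2} := by
  have hK : (2:ℝ) ≤ ((∏ i, k i : ℕ) : ℝ) := by exact_mod_cast hk2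
  have hlogK : 0 < Real.log ((∏ i, k i : ℕ) : ℝ) := Real.log_pos (by linarith)
  have hL0 : 0 ≤ Real.log 2 / Real.log ((∏ i, k i : ℕ) : ℝ) :=
    div_nonneg (Real.log_nonneg one_le_two) hlogK.le
  have hC1 : ∏ i, (k i : ℝ) ^ max ((1/θ i).toReal - (1/p i).toReal) 0 ≤ 2 := by
    refine prod_pow_le_two k hk hk2 _ (fun i => le_max_right _ _) (fun i => ?_)
    refine max_le (le_trans ?_ (hclose i)) hL0
    rw [abs_sub_comm]
    exact le_abs_self _
  have hC2 : ∏ i, (k i : ℝ) ^ max ((1/p i).toReal - (1/θ i).toReal) 0 ≤ 2 := by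
    refine prod_pow_le_two k hk hk2 _ (fun i => le_max_right _ _) (fun i => ?_)
    exact max_le (le_trans (le_abs_self _) (hclose i)) hL0
  constructor
  · intro x hx
    simp only [Set.mem_setOf_eq] at hx ⊢
    calc mixedNorm d k θ x
        ≤ (∏ i, (k i : ℝ) ^ max ((1/θ i).toReal - (1/p i).toReal) 0) * mixedNorm d k p x :=
          mixedNorm_le_mul d k p θ hk hp hθ x
      _ ≤ 2 * (1/2) := by
          refine mul_le_mul hC1 hx (mixedNorm_nonneg _ _ _ _) (by norm_num)
      _ = 1 := by norm_num
  · intro x hx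
    simp only [Set.mem_setOf_eq] at hx ⊢
    calc mixedNorm d k p x
        ≤ (∏ i, (k i : ℝ) ^ max ((1/p i).toReal - (1/θ i).toReal) 0) * mixedNorm d k θ x :=
          mixedNorm_le_mul d k θ p hk hθ hp x
      _ ≤ 2 * 1 := mul_le_mul hC2 hx (mixedNorm_nonneg _ _ _ _) (by norm_num)
      _ = 2 := by norm_num
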